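/- Let R ⊆ S be a ring extension such that R is perinormal in S, and let X be an indeterminate. Then the subring R + XS[X] is perinormal in the polynomial ring S[X], and the subring R + XS[[X]] is perinormal in the power series ring S[[X]]. -/

import Mathlib

/-- A ring homomorphism `f : A →+* B` satisfies going-down: whenever `p₁ ⊆ p₂` are primes of `A`
and `Q₂` is a prime of `B` contracting to `p₂`, there is a prime `Q₁ ⊆ Q₂` of `B`
contracting to `p₁`. -/
def GoingDownHom {A B : Type*} [CommRing A] [CommRing B] (f : A →+* B) : Prop :=
  ∀ (p₁ p₂ : Ideal A), p₁.IsPrime → p₂.IsPrime → p₁ ≤ p₂ →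
    ∀ Q₂ : Ideal B, Q₂.IsPrime → Q₂.comap f = p₂ →
      ∃ Q₁ : Ideal B, Q₁.IsPrime ∧ Q₁ ≤ Q₂ ∧ Q₁.comap f = p₁

/-- The canonical map from the localization of a subring `A ⊆ B` at a submonoid `W ⊆ A`
to the localization of `B` at the image of `W` in `B`. -/
noncomputable def locMap {B : Type*} [CommRing B] (A : Subring B) (W : Submonoid A) :
    Localization W →+* Localization (W.map A.subtype) :=
  IsLocalization.lift (M := W) (S := Localization W)
    (g := (algebraMap B (Localization (W.map A.subtype))).comp A.subtype)
    (fun y => IsLocalization.map_units (M := W.map A.subtype) (Localization (W.map A.subtype))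
      ⟨A.subtype y, ⟨y, y.2, rfl⟩⟩)

/-- A subring `A ⊆ B` is perinormal in `B` at the prime `p` of `A`:  the localization `A_p`
(i.e. the image of `Localization.AtPrime p` in `B_{A∖p}`) is the only local ring `T` between
`A_p` and `B_{A∖p}` whose maximal ideal contracts to `pA_p` and which satisfies going-down
over `A_p`. -/
def PeriAt {B : Type*} [CommRing B] (A : Subring B) (p : Ideal A) (hp : p.IsPrime) : Prop :=
  haveI := hp
  ∀ (T : Subring (Localization (p.primeCompl.map A.subtype)))
    (hT : (locMap A p.primeCompl).range ≤ T),
    IsLocalRing T →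
    (∀ M : Ideal T, M.IsMaximal →
      M.comap ((locMap A p.primeCompl).codRestrict T (fun x => hT ⟨x, rfl⟩)) =
        IsLocalRing.maximalIdeal (Localization.AtPrime p)) →
    GoingDownHom ((locMap A p.primeCompl).codRestrict T (fun x => hT ⟨x, rfl⟩)) →
    T = (locMap A p.primeCompl).range

/-- A subring `A` of `B` is perinormal in `B`. -/
def PerinormalIn {B : Type*} [CommRing B] (A : Subring B) : Prop :=
  ∀ (p : Ideal A) (hp : p.IsPrime), PeriAt A p hp

/-- An integral domain `R` is perinormal:  every local overring of `R`
(local ring between `R` and its fraction field) satisfying going-down over `R`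
is a localization of `R` at a prime ideal. -/
def PerinormalDomain (R : Type*) [CommRing R] [IsDomain R] : Prop :=
  ∀ (T : Subring (FractionRing R)) (hT : (algebraMap R (FractionRing R)).range ≤ T),
    IsLocalRing T →
    GoingDownHom ((algebraMap R (FractionRing R)).codRestrict T (fun x => hT ⟨x, rfl⟩)) →
    ∃ p : Ideal R, p.IsPrime ∧
      (T : Set (FractionRing R)) =
        {x | ∃ r s : R, s ∉ p ∧
          x * algebraMap R (FractionRing R) s = algebraMap R (FractionRing R) r}

/-- A subring `A ⊆ B` is apparently fragile in `B`: for every ring `C` with `A ⊊ C ⊆ B`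
there are a minimal prime `p` of `A` and distinct primes `P, Q` of `C` contracting to `p`. -/
def ApparentlyFragile {B : Type*} [CommRing B] (A : Subring B) : Prop :=
  ∀ (C : Subring B) (hAC : A ≤ C), A ≠ C →
    ∃ p ∈ minimalPrimes A, ∃ P Q : Ideal C, P.IsPrime ∧ Q.IsPrime ∧ P ≠ Q ∧
      P.comap (Subring.inclusion hAC) = p ∧ Q.comap (Subring.inclusion hAC) = p

/-- A subring `A ⊆ B` is fragile in `B`: for every prime `P` of `A`, the extension
`A_P ⊆ B_{A∖P}` is apparently fragile. -/
def Fragile {B : Type*} [CommRing B] (A : Subring B) : Prop :=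
  ∀ (P : Ideal A) (hP : P.IsPrime),
    haveI := hP
    ApparentlyFragile (locMap A P.primeCompl).range

/-- A subring `A ⊆ B` is globally fragile in `B`: for every multiplicative subset `W` of `A`,
the extension `A_W ⊆ B_W` is apparently fragile. -/
def GloballyFragile {B : Type*} [CommRing B] (A : Subring B) : Prop :=
  ∀ W : Submonoid A, ApparentlyFragile (locMap A W).range

/-- An integral domain `S` is a generalized Krull domain: (i) `S` is the intersection of its
localizations at height-one primes (inside its fraction field), (ii) every nonzero element lies
in only finitely many height-one primes, and (iii) the localization at every height-one prime
is a valuation ring. -/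
def IsGenKrull (S : Type*) [CommRing S] [IsDomain S] : Prop :=
  (∀ x : FractionRing S,
      (∀ (p : Ideal S) (hp : p.IsPrime), Order.height (⟨p, hp⟩ : PrimeSpectrum S) = 1 →
        ∃ a s : S, s ∉ p ∧ x * algebraMap S (FractionRing S) s = algebraMap S (FractionRing S) a) →
      ∃ r : S, algebraMap S (FractionRing S) r = x) ∧
  (∀ s : S, s ≠ 0 →
      {p : Ideal S | ∃ hp : p.IsPrime, Order.height (⟨p, hp⟩ : PrimeSpectrum S) = 1 ∧ s ∈ p}.Finite) ∧
  (∀ (p : Ideal S) (hp : p.IsPrime), Order.height (⟨p, hp⟩ : PrimeSpectrum S) = 1 →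
      haveI := hp
      ValuationRing (Localization.AtPrime p))

/-- A prime ideal `Q` has height one. -/
def HeightOne {S : Type*} [CommRing S] (Q : Ideal S) : Prop :=
  ∃ hQ : Q.IsPrime, Order.height (⟨Q, hQ⟩ : PrimeSpectrum S) = 1

/-!
Write `A = f⁻¹(R)` for a surjection `f : B → S` (evaluation at `0`, resp. the constant
coefficient). Let `P` be a prime of `A`. If `P` misses an element `c` of `ker f`, then
`c B ⊆ A` and `A_P = B_{A∖P}`, so there is nothing to prove. Otherwise `P = f⁻¹(p)` for a prime
`p` of `R`, and `f` induces a surjection `A_P → R_p` together with a map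
`B_{A∖P} → S_{R∖p}` whose kernel lies in `A_P`. The image of a local going-down overring `T`
of `A_P` whose maximal ideal contracts to `PA_P` is again such an overring of `R_p`, hence equals
`R_p` by perinormality of `R`; as the kernel lies in `A_P`, this forces `T = A_P`.
-/

open IsLocalRing

section SurjectiveSquare

variable {A B A' B' : Type*} [CommRing A] [CommRing B] [CommRing A'] [CommRing B']
  {f : A →+* B} {g : A' →+* B'} {ψ : A →+* A'} {π : B →+* B'}

theorem GoingDownHom.of_surjective_square (hf : GoingDownHom f) (hψ : Function.Surjective ψ)
    (hπ : Function.Surjective π) (hsq : π.comp f = g.comp ψ)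
    (hker : RingHom.ker π ≤ (RingHom.ker ψ).map f) : GoingDownHom g := by
  have hcomap (I : Ideal B') : (I.comap π).comap f = (I.comap g).comap ψ := by
    rw [Ideal.comap_comap, Ideal.comap_comap, hsq]
  intro p₁ p₂ hp₁ hp₂ hle Q₂ hQ₂ hQ₂p₂
  obtain ⟨Q₁, hQ₁, hQ₁Q₂, hQ₁p₁⟩ := hf (p₁.comap ψ) (p₂.comap ψ) (hp₁.comap ψ) (hp₂.comap ψ)
    (Ideal.comap_mono hle) (Q₂.comap π) (hQ₂.comap π) (by rw [hcomap, hQ₂p₂])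
  have hkerQ₁ : RingHom.ker π ≤ Q₁ := by
    refine hker.trans (Ideal.map_le_iff_le_comap.2 ?_)
    rw [hQ₁p₁, RingHom.ker_eq_comap_bot]
    exact Ideal.comap_mono bot_le
  have hQ₁π : (Q₁.map π).comap π = Q₁ := by
    rw [Ideal.comap_map_of_surjective' π hπ, sup_eq_left.2 hkerQ₁]
  refine ⟨Q₁.map π, Ideal.map_isPrime_of_surjective hπ hkerQ₁,
    Ideal.map_le_iff_le_comap.2 hQ₁Q₂, Ideal.comap_injective_of_surjective ψ hψ ?_⟩
  rw [← hcomap, hQ₁π, hQ₁p₁]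

theorem comap_eq_maximalIdeal_of_surjective_square [IsLocalRing A] [IsLocalRing A']
    (hf : ∀ M : Ideal B, M.IsMaximal → M.comap f = maximalIdeal A) (hψ : Function.Surjective ψ)
    (hπ : Function.Surjective π) (hsq : π.comp f = g.comp ψ) (M : Ideal B') (hM : M.IsMaximal) :
    M.comap g = maximalIdeal A' := by
  apply Ideal.comap_injective_of_surjective ψ hψ
  calc (M.comap g).comap ψ = (M.comap π).comap f := by
        rw [Ideal.comap_comap, Ideal.comap_comap, hsq]
    _ = maximalIdeal A := hf _ (Ideal.comap_isMaximal_of_surjective π hπ)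
    _ = (maximalIdeal A').comap ψ :=
      (eq_maximalIdeal (Ideal.comap_isMaximal_of_surjective ψ hψ)).symm

end SurjectiveSquare

def RingHom.IsPerinormal {L L' : Type*} [CommRing L] [IsLocalRing L] [CommRing L']
    (f : L →+* L') : Prop :=
  ∀ (T : Subring L') (hT : f.range ≤ T), IsLocalRing T →
    (∀ M : Ideal T, M.IsMaximal →
      M.comap (f.codRestrict T fun x => hT ⟨x, rfl⟩) = maximalIdeal L) →
    GoingDownHom (f.codRestrict T fun x => hT ⟨x, rfl⟩) → T = f.range

theorem periAt_iff_isPerinormal {B : Type*} [CommRing B] (A : Subring B) (p : Ideal A)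
    (hp : p.IsPrime) : PeriAt A p hp ↔ (locMap A p.primeCompl).IsPerinormal :=
  Iff.rfl

theorem RingHom.IsPerinormal.of_surjective_square {LA LB LR LS : Type*} [CommRing LA]
    [CommRing LB] [CommRing LR] [CommRing LS] [IsLocalRing LA] [IsLocalRing LR]
    {locA : LA →+* LB} {locR : LR →+* LS} {ψ : LA →+* LR} {φ : LB →+* LS}
    (hR : locR.IsPerinormal) (hψ : Function.Surjective ψ) (hsq : φ.comp locA = locR.comp ψ)
    (hker : ∀ z, φ z = 0 → z ∈ locA.range) (hlocR : Function.Injective locR) :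
    locA.IsPerinormal := by
  intro T hT _ hmax hgd
  have hT₀ : locR.range ≤ T.map φ := by
    rintro _ ⟨x, rfl⟩
    obtain ⟨y, rfl⟩ := hψ x
    exact ⟨locA y, hT ⟨y, rfl⟩, RingHom.congr_fun hsq y⟩
  let ιA := locA.codRestrict T fun x => hT ⟨x, rfl⟩
  let ιR := locR.codRestrict (T.map φ) fun x => hT₀ ⟨x, rfl⟩
  let π : T →+* T.map φ := φ.restrict T (T.map φ) fun x hx => ⟨x, hx, rfl⟩
  have hπ : Function.Surjective π := by
    rintro ⟨_, t, ht, rfl⟩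
    exact ⟨⟨t, ht⟩, rfl⟩
  have hsqT : π.comp ιA = ιR.comp ψ :=
    RingHom.ext fun y => Subtype.ext (RingHom.congr_fun hsq y)
  have hkerπ : RingHom.ker π ≤ (RingHom.ker ψ).map ιA := by
    intro z hz
    have hφz : φ z = 0 := congrArg Subtype.val hz
    obtain ⟨y, hy⟩ := hker z hφz
    have hψy : ψ y = 0 := hlocR <| by
      rw [← RingHom.comp_apply, ← hsq, RingHom.comp_apply, hy, hφz, map_zero]
    rw [show z = ιA y from Subtype.ext hy.symm]
    exact Ideal.mem_map_of_mem _ hψy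
  have : Nontrivial (T.map φ) :=
    Function.Injective.nontrivial (f := ιR) fun _ _ h => hlocR (congrArg Subtype.val h)
  have hT₀eq : T.map φ = locR.range := hR _ hT₀ (.of_surjective' π hπ)
    (comap_eq_maximalIdeal_of_surjective_square hmax hψ hπ hsqT)
    (hgd.of_surjective_square hψ hπ hsqT hkerπ)
  refine le_antisymm (fun t ht => ?_) hT
  obtain ⟨x, hx⟩ : φ t ∈ locR.range := hT₀eq ▸ ⟨t, ht, rfl⟩
  obtain ⟨y, rfl⟩ := hψ x
  obtain ⟨z, hz⟩ := hker (t - locA y) (by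
    rw [map_sub, ← RingHom.comp_apply, hsq, RingHom.comp_apply, hx, sub_self])
  exact ⟨z + y, by rw [map_add, hz, sub_add_cancel]⟩

section LocMap

variable {B : Type*} [CommRing B] (A : Subring B) (W : Submonoid A)

theorem locMap_eq_map : locMap A W = IsLocalization.map _ A.subtype W.le_comap_map :=
  rfl

theorem locMap_algebraMap (a : A) :
    locMap A W (algebraMap A (Localization W) a) =
      algebraMap B (Localization (W.map A.subtype)) a :=
  IsLocalization.lift_eq _ a

theorem locMap_injective : Function.Injective (locMap A W) :=
  IsLocalization.map_injective_of_injective W (Localization W) (Localization (W.map A.subtype))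
    (g := A.subtype) Subtype.val_injective

theorem mk'_mem_range_locMap (c : W) (b : B) (hcb : (c : B) * b ∈ A) (w : W.map A.subtype) :
    IsLocalization.mk' (Localization (W.map A.subtype)) b w ∈ (locMap A W).range := by
  obtain ⟨w₀, hw₀, hw⟩ := w.2
  replace hw : (w₀ : B) = w := hw
  refine ⟨IsLocalization.mk' (Localization W) (⟨_, hcb⟩ : A) (c * ⟨w₀, hw₀⟩), ?_⟩
  rw [locMap_eq_map, IsLocalization.map_mk']
  apply IsLocalization.mk'_eq_of_eq'
  simp only [Submonoid.coe_mul, Subring.subtype_apply, Subring.coe_mul, hw]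
  ring

theorem locMap_surjective_of_mul_mem (c : W) (hc : ∀ b, (c : B) * b ∈ A) :
    Function.Surjective (locMap A W) := by
  intro z
  obtain ⟨⟨b, w⟩, rfl⟩ := IsLocalization.mk'_surjective (W.map A.subtype) z
  exact mk'_mem_range_locMap A W c b (hc b) w

end LocMap

section Surjection

variable {B S : Type*} [CommRing B] [CommRing S] {f : B →+* S} (R : Subring S)

def RingHom.restrictComap (f : B →+* S) : R.comap f →+* R :=
  f.restrict (R.comap f) R fun _ h => h

theorem RingHom.restrictComap_surjective (hf : Function.Surjective f) :
    Function.Surjective (f.restrictComap R) := fun r =>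
  let ⟨b, hb⟩ := hf r
  ⟨⟨b, by simp [hb]⟩, Subtype.ext hb⟩

theorem Localization.localRingHom_comap_surjective {A : Type*} [CommRing A] {g : A →+* S}
    (hg : Function.Surjective g) (p : Ideal S) [p.IsPrime] :
    Function.Surjective (Localization.localRingHom (p.comap g) p g rfl) :=
  have : IsLocalization ((p.comap g).primeCompl.map g) (Localization.AtPrime p) :=
    (Submonoid.map_comap_eq_of_surjective hg p.primeCompl).symm ▸ Localization.isLocalization
  IsLocalization.map_surjective_of_surjective _ _ _ hg

theorem PeriAt.comap_of_surjective (hf : Function.Surjective f) (p : Ideal R) (hp : p.IsPrime)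
    (h : PeriAt R p hp) : PeriAt (R.comap f) (p.comap (f.restrictComap R)) (hp.comap _) := by
  set g := f.restrictComap R
  have hg := RingHom.restrictComap_surjective R hf
  set P := p.comap g
  let ψ := Localization.localRingHom P p g rfl
  have hle : P.primeCompl.map (R.comap f).subtype ≤ (p.primeCompl.map R.subtype).comap f := by
    rintro _ ⟨a, ha, rfl⟩
    exact ⟨g a, ha, rfl⟩
  let φ : Localization (P.primeCompl.map (R.comap f).subtype) →+*
      Localization (p.primeCompl.map R.subtype) :=
    IsLocalization.map _ f hle
  have hsq : φ.comp (locMap (R.comap f) P.primeCompl) = (locMap R p.primeCompl).comp ψ := by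
    apply IsLocalization.ringHom_ext P.primeCompl
    ext a
    simp only [RingHom.comp_apply, locMap_algebraMap, φ, ψ, Localization.localRingHom_to_map,
      IsLocalization.map_eq]
    rfl
  have hker (z) (hz : φ z = 0) : z ∈ (locMap (R.comap f) P.primeCompl).range := by
    obtain ⟨⟨b, w⟩, rfl⟩ :=
      IsLocalization.mk'_surjective (P.primeCompl.map (R.comap f).subtype) z
    rw [IsLocalization.map_mk', IsLocalization.mk'_eq_zero_iff] at hz
    obtain ⟨⟨_, r, hr, rfl⟩, hrb⟩ := hz
    obtain ⟨c, rfl⟩ := hg r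
    refine mk'_mem_range_locMap (R.comap f) P.primeCompl ⟨c, hr⟩ b ?_ w
    show f (c * b) ∈ R
    rw [map_mul]
    exact hrb ▸ R.zero_mem
  exact (periAt_iff_isPerinormal (R.comap f) P _).2 <|
    ((periAt_iff_isPerinormal R p hp).1 h).of_surjective_square
      (Localization.localRingHom_comap_surjective hg p) hsq hker (locMap_injective R _)

theorem PerinormalIn.comap_of_surjective (h : PerinormalIn R) (hf : Function.Surjective f) :
    PerinormalIn (R.comap f) := by
  intro P hP
  set g := f.restrictComap R
  have hg := RingHom.restrictComap_surjective R hf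
  by_cases hker : RingHom.ker g ≤ P
  · obtain ⟨p, hp, rfl⟩ : ∃ p : Ideal R, ∃ hp : p.IsPrime, P = p.comap g :=
      ⟨P.map g, Ideal.map_isPrime_of_surjective hg hker,
        by rw [Ideal.comap_map_of_surjective' g hg, sup_eq_left.2 hker]⟩
    exact (h p hp).comap_of_surjective R hf
  · obtain ⟨c, hc, hcP⟩ := Set.not_subset.1 hker
    have hfc : f c = 0 := congrArg Subtype.val hc
    intro T hT _ _ _
    refine le_antisymm (fun z _ => ?_) hT
    refine locMap_surjective_of_mul_mem _ _ ⟨c, hcP⟩ (fun b => ?_) z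
    show f (c * b) ∈ R
    rw [map_mul, hfc, zero_mul]
    exact R.zero_mem

end Surjection

/-- If `R ⊆ S` is a ring extension with `R` perinormal in `S`, then
`R + XS[X]` (the polynomials over `S` whose constant term lies in `R`, i.e. the preimage of
`R` under evaluation at `0`) is perinormal in `S[X]`, and `R + XS[[X]]` (the power series over
`S` whose constant term lies in `R`) is perinormal in `S[[X]]`. -/
theorem perinormalIn_polynomial_and_powerSeries {S : Type*} [CommRing S]
    (R : Subring S) (h : PerinormalIn R) :
    PerinormalIn (R.comap (Polynomial.evalRingHom (0 : S))) ∧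
    PerinormalIn (R.comap (PowerSeries.constantCoeff : PowerSeries S →+* S)) :=
  ⟨h.comap_of_surjective R fun s => ⟨Polynomial.C s, Polynomial.eval_C⟩,
    h.comap_of_surjective R fun s => ⟨PowerSeries.C s, PowerSeries.constantCoeff_C s⟩⟩
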